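/- arXiv:2511.07637 — 4 statements merged into one kernel-verified Lean document; each statement's English description precedes it below -/
import Mathlib

section
/- Let V be a nonempty finite set, let Δ > 0 and ε ≥ 0, and let u, u' : V → ℝ be two utility functions satisfying |u(v) − u'(v)| ≤ Δ for all v ∈ V. Define the exponential-mechanism probabilities p(v) = exp(ε·u(v)/(2Δ)) / Σ_{w∈V} exp(ε·u(w)/(2Δ)) and p'(v) = exp(ε·u'(v)/(2Δ)) / Σ_{w∈V} exp(ε·u'(w)/(2Δ)). Then for every v ∈ V, p(v) ≤ exp(ε)·p'(v). -/
open Real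

/-- Pointwise ε-DP inequality for the exponential mechanism on a nonempty finite set:
if the utilities differ by at most Δ pointwise, the selection probabilities differ by at
most a multiplicative factor `exp ε`. -/
theorem expoMech_pointwise_dp
    {V : Type*} [Fintype V] [Nonempty V]
    (Δ ε : ℝ) (hΔ : 0 < Δ) (hε : 0 ≤ ε)
    (u u' : V → ℝ) (hsens : ∀ v : V, |u v - u' v| ≤ Δ) (v : V) :
    Real.exp (ε * u v / (2 * Δ)) / (∑ w : V, Real.exp (ε * u w / (2 * Δ)))
      ≤ Real.exp ε *
        (Real.exp (ε * u' v / (2 * Δ)) / (∑ w : V, Real.exp (ε * u' w / (2 * Δ)))) := by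
  have hS : 0 < ∑ w : V, Real.exp (ε * u w / (2 * Δ)) :=
    Finset.sum_pos (fun w _ => Real.exp_pos _) Finset.univ_nonempty
  have hS' : 0 < ∑ w : V, Real.exp (ε * u' w / (2 * Δ)) :=
    Finset.sum_pos (fun w _ => Real.exp_pos _) Finset.univ_nonempty
  have key : ∀ (a b : V → ℝ), (∀ w, |a w - b w| ≤ Δ) → ∀ w,
      Real.exp (ε * a w / (2 * Δ)) ≤ Real.exp (ε / 2) * Real.exp (ε * b w / (2 * Δ)) := by
    intro a b h w
    rw [← Real.exp_add]
    apply Real.exp_le_exp.mpr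
    have h1 : a w - b w ≤ Δ := (abs_le.mp (h w)).2
    have h2Δ : (0:ℝ) < 2 * Δ := by linarith
    have h3 : ε * (a w - b w) / (2 * Δ) ≤ ε / 2 := by
      rw [div_le_iff₀ h2Δ]
      nlinarith [mul_le_mul_of_nonneg_left h1 hε]
    have h4 : ε * a w / (2 * Δ) - ε * b w / (2 * Δ) = ε * (a w - b w) / (2 * Δ) := by ring
    linarith
  have hnum : Real.exp (ε * u v / (2 * Δ)) ≤ Real.exp (ε / 2) * Real.exp (ε * u' v / (2 * Δ)) :=
    key u u' hsens v
  have hden : (∑ w : V, Real.exp (ε * u' w / (2 * Δ)))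
      ≤ Real.exp (ε / 2) * ∑ w : V, Real.exp (ε * u w / (2 * Δ)) := by
    rw [Finset.mul_sum]
    exact Finset.sum_le_sum fun w _ => key u' u (fun w => by rw [abs_sub_comm]; exact hsens w) w
  have hexp : Real.exp (ε / 2) * Real.exp (ε / 2) = Real.exp ε := by
    rw [← Real.exp_add]; ring_nf
  rw [mul_div_assoc', div_le_div_iff₀ hS hS']
  calc Real.exp (ε * u v / (2 * Δ)) * ∑ w : V, Real.exp (ε * u' w / (2 * Δ))
      ≤ (Real.exp (ε / 2) * Real.exp (ε * u' v / (2 * Δ))) *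
        (Real.exp (ε / 2) * ∑ w : V, Real.exp (ε * u w / (2 * Δ))) := by
        apply mul_le_mul hnum hden hS'.le
        positivity
    _ = Real.exp ε * Real.exp (ε * u' v / (2 * Δ)) * ∑ w : V, Real.exp (ε * u w / (2 * Δ)) := by
        rw [← hexp]; ring
end

section
/- Let μ and ν be probability measures on a measurable space, let γ ∈ [0,1] and ε ≥ 0, and suppose that for every measurable set A, μ(A) ≤ exp(ε)·ν(A) and ν(A) ≤ exp(ε)·μ(A). Let ρ = (1−γ)·ν + γ·μ be the mixture. Then for every measurable set A, ρ(A) ≤ (1 + γ·(exp(ε) − 1))·ν(A) and ν(A) ≤ (1 + γ·(exp(ε) − 1))·ρ(A). In particular, ρ and ν satisfy the defining inequality of log(1 + γ(e^ε − 1))-differential privacy in both directions. -/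
open MeasureTheory Real

/-- Amplification by subsampling: if `μ` and `ν` are ε-indistinguishable in both directions
and `ρ = (1-γ)·ν + γ·μ`, then `ρ` and `ν` satisfy the defining inequality of
`log (1 + γ(e^ε - 1))`-differential privacy in both directions. -/
theorem subsampling_amplification
    {Ω : Type*} [MeasurableSpace Ω]
    (μ ν : Measure Ω) [IsProbabilityMeasure μ] [IsProbabilityMeasure ν]
    (γ ε : ℝ) (hγ0 : 0 ≤ γ) (hγ1 : γ ≤ 1) (hε : 0 ≤ ε)
    (h₁ : ∀ A : Set Ω, MeasurableSet A → μ A ≤ ENNReal.ofReal (Real.exp ε) * ν A)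
    (h₂ : ∀ A : Set Ω, MeasurableSet A → ν A ≤ ENNReal.ofReal (Real.exp ε) * μ A)
    (ρ : Measure Ω)
    (hρ : ρ = ENNReal.ofReal (1 - γ) • ν + ENNReal.ofReal γ • μ)
    (A : Set Ω) (hA : MeasurableSet A) :
    ρ A ≤ ENNReal.ofReal (1 + γ * (Real.exp ε - 1)) * ν A ∧
    ν A ≤ ENNReal.ofReal (1 + γ * (Real.exp ε - 1)) * ρ A := by
  set a := Real.exp ε with ha
  have ha1 : (1:ℝ) ≤ a := Real.one_le_exp hε
  have ha0 : (0:ℝ) < a := Real.exp_pos ε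
  have hγ' : (0:ℝ) ≤ 1 - γ := by linarith
  have hc0 : (0:ℝ) ≤ 1 + γ * (a - 1) := by nlinarith
  have hρA : ρ A = ENNReal.ofReal (1 - γ) * ν A + ENNReal.ofReal γ * μ A := by
    simp [hρ, Measure.add_apply, Measure.smul_apply, smul_eq_mul]
  constructor
  · -- first direction
    calc ρ A = ENNReal.ofReal (1 - γ) * ν A + ENNReal.ofReal γ * μ A := hρA
    _ ≤ ENNReal.ofReal (1 - γ) * ν A + ENNReal.ofReal γ * (ENNReal.ofReal a * ν A) := by
        gcongr; exact h₁ A hA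
    _ = (ENNReal.ofReal (1 - γ) + ENNReal.ofReal (γ * a)) * ν A := by
        rw [← mul_assoc, ← ENNReal.ofReal_mul hγ0, add_mul]
    _ = ENNReal.ofReal (1 + γ * (a - 1)) * ν A := by
        rw [← ENNReal.ofReal_add hγ' (by positivity)]
        ring_nf
  · -- second direction
    have hμ : ENNReal.ofReal a⁻¹ * ν A ≤ μ A := by
      calc ENNReal.ofReal a⁻¹ * ν A ≤ ENNReal.ofReal a⁻¹ * (ENNReal.ofReal a * μ A) := by
            gcongr; exact h₂ A hA
      _ = ENNReal.ofReal (a⁻¹ * a) * μ A := by rw [← mul_assoc, ← ENNReal.ofReal_mul (by positivity)]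
      _ = μ A := by rw [inv_mul_cancel₀ (ne_of_gt ha0)]; simp
    have key : (1:ℝ) ≤ (1 + γ * (a - 1)) * ((1 - γ) + γ * a⁻¹) := by
      have h : a⁻¹ * a = 1 := inv_mul_cancel₀ (ne_of_gt ha0)
      have h4 : (1 + γ * (a - 1)) * ((1 - γ) + γ * a⁻¹)
          = 1 + γ * (1 - γ) * ((a - 1)^2 * a⁻¹) := by
        field_simp
        ring
      have h2 : (0:ℝ) ≤ γ * (1 - γ) * ((a - 1)^2 * a⁻¹) := by positivity
      linarith
    calc ν A = 1 * ν A := (one_mul _).symm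
    _ ≤ ENNReal.ofReal ((1 + γ * (a - 1)) * ((1 - γ) + γ * a⁻¹)) * ν A := by
        gcongr
        rw [← ENNReal.ofReal_one]
        exact ENNReal.ofReal_le_ofReal key
    _ = ENNReal.ofReal (1 + γ * (a - 1)) * (ENNReal.ofReal ((1 - γ) + γ * a⁻¹) * ν A) := by
        rw [ENNReal.ofReal_mul hc0, mul_assoc]
    _ ≤ ENNReal.ofReal (1 + γ * (a - 1)) * ρ A := by
        gcongr
        rw [hρA, ENNReal.ofReal_add hγ' (by positivity), add_mul,
          ENNReal.ofReal_mul hγ0, mul_assoc]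
        gcongr
end

section
/- Let X and Y be measurable spaces, let μ and ν be probability measures on X, and let κ, κ' be Markov kernels from X to Y. Suppose ε₁, ε₂ ≥ 0 are such that μ(A) ≤ exp(ε₁)·ν(A) for every measurable A ⊆ X, and for every x ∈ X, κ(x)(B) ≤ exp(ε₂)·κ'(x)(B) for every measurable B ⊆ Y. Then for every measurable set C ⊆ X × Y, the composed measures satisfy (μ ⊗ κ)(C) ≤ exp(ε₁ + ε₂)·(ν ⊗ κ')(C). -/
open MeasureTheory ProbabilityTheory Real

open scoped ENNReal

namespace MeasureTheory.Measure

variable {α β : Type*} [MeasurableSpace α] [MeasurableSpace β]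
  {μ ν : Measure α} {κ κ' : Kernel α β}

lemma compProd_le_smul_compProd_of_le_smul [SFinite μ] [SFinite ν] [IsSFiniteKernel κ]
    {a : ℝ≥0∞} (h : μ ≤ a • ν) : μ ⊗ₘ κ ≤ a • (ν ⊗ₘ κ) := by
  refine Measure.le_iff.2 fun s hs => ?_
  rw [compProd_apply hs, smul_apply, compProd_apply hs, ← lintegral_smul_measure]
  exact lintegral_mono' h le_rfl

lemma compProd_le_smul_compProd_of_forall_le_smul [SFinite μ] [IsSFiniteKernel κ]
    [IsSFiniteKernel κ'] {b : ℝ≥0∞} (h : ∀ x, κ x ≤ b • κ' x) : μ ⊗ₘ κ ≤ b • (μ ⊗ₘ κ') := by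
  refine Measure.le_iff.2 fun s hs => ?_
  rw [compProd_apply hs, smul_apply, compProd_apply hs, smul_eq_mul,
    ← lintegral_const_mul _ (Kernel.measurable_kernel_prodMk_left hs)]
  exact lintegral_mono fun x => h x _

lemma compProd_le_smul_compProd [SFinite μ] [SFinite ν] [IsSFiniteKernel κ] [IsSFiniteKernel κ']
    {a b : ℝ≥0∞} (hμν : μ ≤ a • ν) (hκκ' : ∀ x, κ x ≤ b • κ' x) :
    μ ⊗ₘ κ ≤ (a * b) • (ν ⊗ₘ κ') :=
  calc μ ⊗ₘ κ ≤ b • (μ ⊗ₘ κ') := compProd_le_smul_compProd_of_forall_le_smul hκκ'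
    _ ≤ b • a • (ν ⊗ₘ κ') := by gcongr; exact compProd_le_smul_compProd_of_le_smul hμν
    _ = (a * b) • (ν ⊗ₘ κ') := by rw [smul_smul, mul_comm]

end MeasureTheory.Measure

theorem adaptive_composition_dp_general
    {X Y : Type*} [MeasurableSpace X] [MeasurableSpace Y]
    (μ ν : Measure X) [IsProbabilityMeasure μ] [IsProbabilityMeasure ν]
    (κ κ' : Kernel X Y) [IsMarkovKernel κ] [IsMarkovKernel κ']
    (ε₁ ε₂ : ℝ)
    (hμν : ∀ A : Set X, MeasurableSet A → μ A ≤ ENNReal.ofReal (Real.exp ε₁) * ν A)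
    (hκ : ∀ x : X, ∀ B : Set Y, MeasurableSet B →
      κ x B ≤ ENNReal.ofReal (Real.exp ε₂) * κ' x B)
    (C : Set (X × Y)) :
    (μ ⊗ₘ κ) C ≤ ENNReal.ofReal (Real.exp (ε₁ + ε₂)) * (ν ⊗ₘ κ') C := by
  have hμν' : μ ≤ ENNReal.ofReal (exp ε₁) • ν := Measure.le_iff.2 hμν
  have hκκ' : ∀ x, κ x ≤ ENNReal.ofReal (exp ε₂) • κ' x := fun x => Measure.le_iff.2 (hκ x)
  rw [exp_add, ENNReal.ofReal_mul (exp_pos ε₁).le]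
  exact Measure.compProd_le_smul_compProd hμν' hκκ' C

/-- Adaptive basic composition: if `μ(A) ≤ e^{ε₁} ν(A)` for all measurable `A` and
`κ(x)(B) ≤ e^{ε₂} κ'(x)(B)` for all `x` and measurable `B`, then the composition-product
measures satisfy `(μ ⊗ κ)(C) ≤ e^{ε₁+ε₂} (ν ⊗ κ')(C)` for all measurable `C`. -/
theorem adaptive_composition_dp
    {X Y : Type*} [MeasurableSpace X] [MeasurableSpace Y]
    (μ ν : Measure X) [IsProbabilityMeasure μ] [IsProbabilityMeasure ν]
    (κ κ' : Kernel X Y) [IsMarkovKernel κ] [IsMarkovKernel κ']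
    (ε₁ ε₂ : ℝ) (hε₁ : 0 ≤ ε₁) (hε₂ : 0 ≤ ε₂)
    (hμν : ∀ A : Set X, MeasurableSet A → μ A ≤ ENNReal.ofReal (Real.exp ε₁) * ν A)
    (hκ : ∀ x : X, ∀ B : Set Y, MeasurableSet B →
      κ x B ≤ ENNReal.ofReal (Real.exp ε₂) * κ' x B)
    (C : Set (X × Y)) (hC : MeasurableSet C) :
    (μ ⊗ₘ κ) C ≤ ENNReal.ofReal (Real.exp (ε₁ + ε₂)) * (ν ⊗ₘ κ') C :=
  adaptive_composition_dp_general μ ν κ κ' ε₁ ε₂ hμν hκ C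
end

section
/- Let Z be a type with a score function r : Z → ℝ that is injective (no ties), let D be a finite set of elements of Z, let z ∉ D, and let k ≤ |D|. For a finite set S with |S| ≥ k, let TopK(S) denote the set of the k elements of S with the largest r-values. Then the symmetric difference of TopK(D ∪ {z}) and TopK(D) has cardinality at most 2. -/
open Finset symmDiff

/-- `IsTopK r k S T` means `T` is the set of the `k` elements of `S` with the largest
`r`-values: `T ⊆ S`, `|T| = k`, and every element of `T` has a strictly larger score
than every element of `S \ T`. -/
def IsTopK {Z : Type*} [DecidableEq Z] (r : Z → ℝ) (k : ℕ) (S T : Finset Z) : Prop :=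
  T ⊆ S ∧ T.card = k ∧ ∀ x ∈ T, ∀ y ∈ S \ T, r y < r x

/-- Adding a single document changes the top-k retrieved set in at most two elements
(symmetric difference of cardinality at most 2), assuming the score has no ties. -/
theorem topK_symmDiff_card_le_two
    {Z : Type*} [DecidableEq Z] (r : Z → ℝ) (hr : Function.Injective r)
    (D : Finset Z) (z : Z) (hz : z ∉ D) (k : ℕ) (hk : k ≤ D.card)
    (T₁ T₂ : Finset Z)
    (hT₁ : IsTopK r k (insert z D) T₁) (hT₂ : IsTopK r k D T₂) :
    (symmDiff T₁ T₂).card ≤ 2 := by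
  obtain ⟨hT₁S, hT₁c, hT₁top⟩ := hT₁
  obtain ⟨hT₂S, hT₂c, hT₂top⟩ := hT₂
  have hd : (T₁ \ T₂).card = (T₂ \ T₁).card :=
    Finset.card_sdiff_comm (hT₁c.trans hT₂c.symm)
  have h1 : (T₁ \ T₂).card ≤ 1 := by
    rcases eq_empty_or_nonempty (T₂ \ T₁) with he | ⟨u, hu⟩
    · rw [hd, he, card_empty]; omega
    · have hsub : T₁ \ T₂ ⊆ {z} := by
        intro x hx
        rw [mem_singleton]
        by_contra hxz
        obtain ⟨hx1, hx2⟩ := mem_sdiff.1 hx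
        obtain ⟨hu1, hu2⟩ := mem_sdiff.1 hu
        have hxD : x ∈ D := by
          rcases mem_insert.1 (hT₁S hx1) with h | h
          · exact absurd h hxz
          · exact h
        have hlt1 : r x < r u := hT₂top u hu1 x (mem_sdiff.2 ⟨hxD, hx2⟩)
        have hlt2 : r u < r x :=
          hT₁top x hx1 u (mem_sdiff.2 ⟨mem_insert_of_mem (hT₂S hu1), hu2⟩)
        linarith
      exact (card_le_card hsub).trans (by simp)
  calc (symmDiff T₁ T₂).card = (T₁ \ T₂ ∪ T₂ \ T₁).card := by
        rw [symmDiff_def, Finset.sup_eq_union]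
    _ ≤ (T₁ \ T₂).card + (T₂ \ T₁).card := card_union_le _ _
    _ ≤ 2 := by omega
end
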